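/- arXiv:2202.02485 — 2 statements merged into one kernel-verified Lean document; each statement's English description precedes it below -/
import Mathlib

section
/- The inverse of the homeomorphism H (from the counterexample) is given by G(y) = y + ε for y ≥ 1-ε, G(y) = (y/(1-ε))^{1-ε} for 0 < y < 1-ε, G(0) = 0, G(y) = -((1-ε)³(-y)^{-2} + ε)^{-1/2} for -1+ε < y < 0, and G(y) = y - ε for y ≤ ε - 1; that is, G(H(x)) = x and H(G(y)) = y for all x, y ∈ ℝ. -/
/-!
On `(0, 1)` and `(0, 1 - ε)` the two maps are `(1 - ε)`-rescaled powers with reciprocal exponents.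
On `(-1, 0)` and `(-1 + ε, 0)`, writing `H x = -t` and `G y = -s`, both formulas are equivalent to
the single relation `(1 - ε)³ / t² = 1 / x² - ε` between the absolute values, so after squaring
they invert each other. The outer pieces are translations by `ε`, and each piece of `H` lands in
the corresponding piece of the domain of `G` (and conversely) because `ε < 1`.
-/

noncomputable def Hmap (ε : ℝ) (x : ℝ) : ℝ :=
  if 1 ≤ x then x - ε
  else if 0 < x then (1 - ε) * x ^ ((1 : ℝ) / (1 - ε))
  else if x = 0 then 0
  else if -1 < x then -((1 - ε) ^ ((3 : ℝ) / 2) * ((x ^ 2)⁻¹ - ε) ^ (-(1 / 2 : ℝ)))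
  else x + ε

noncomputable def Gmap (ε : ℝ) (y : ℝ) : ℝ :=
  if 1 - ε ≤ y then y + ε
  else if 0 < y then (y / (1 - ε)) ^ (1 - ε)
  else if y = 0 then 0
  else if -1 + ε < y then -(((1 - ε) ^ 3 * ((-y) ^ 2)⁻¹ + ε) ^ (-(1 / 2 : ℝ)))
  else y - ε

namespace Real

theorem rpow_neg_half_eq_iff {a t : ℝ} (ha : 0 < a) (ht : 0 < t) :
    a ^ (-(1 / 2 : ℝ)) = t ↔ (t ^ 2)⁻¹ = a := by
  rw [rpow_neg ha.le, ← sqrt_eq_rpow, inv_eq_iff_eq_inv, sqrt_eq_iff_eq_sq ha.le (by positivity),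
    inv_pow, eq_comm]

theorem rpow_three_halves_mul_rpow_neg_half_eq_iff {c a t : ℝ} (hc : 0 < c) (ha : 0 < a)
    (ht : 0 < t) : c ^ (3 / 2 : ℝ) * a ^ (-(1 / 2 : ℝ)) = t ↔ c ^ 3 * (t ^ 2)⁻¹ = a := by
  have hc32 : 0 < c ^ (3 / 2 : ℝ) := by positivity
  have hsq : (c ^ (3 / 2 : ℝ)) ^ 2 = c ^ 3 := by
    rw [← rpow_mul_natCast hc.le]; norm_num
  rw [mul_comm, ← eq_div_iff_mul_eq hc32.ne', rpow_neg_half_eq_iff ha (by positivity), div_pow, hsq,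
    inv_div, div_eq_mul_inv]

end Real

open Real

section Branches

variable {ε x y : ℝ}

theorem Hmap_of_one_le (hx : 1 ≤ x) : Hmap ε x = x - ε := by
  rw [Hmap, if_pos hx]

theorem Hmap_of_pos_of_lt_one (h0 : 0 < x) (h1 : x < 1) :
    Hmap ε x = (1 - ε) * x ^ ((1 : ℝ) / (1 - ε)) := by
  rw [Hmap, if_neg h1.not_ge, if_pos h0]

theorem Hmap_zero : Hmap ε 0 = 0 := by
  simp [Hmap]

theorem Hmap_of_neg_of_neg_one_lt (h0 : x < 0) (h1 : -1 < x) :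
    Hmap ε x = -((1 - ε) ^ ((3 : ℝ) / 2) * ((x ^ 2)⁻¹ - ε) ^ (-(1 / 2 : ℝ))) := by
  rw [Hmap, if_neg (by linarith), if_neg h0.not_gt, if_neg h0.ne, if_pos h1]

theorem Hmap_of_le_neg_one (hx : x ≤ -1) : Hmap ε x = x + ε := by
  rw [Hmap, if_neg (by linarith), if_neg (by linarith), if_neg (by linarith), if_neg hx.not_gt]

theorem Gmap_of_one_sub_le (hy : 1 - ε ≤ y) : Gmap ε y = y + ε := by
  rw [Gmap, if_pos hy]

theorem Gmap_of_pos_of_lt_one_sub (h0 : 0 < y) (h1 : y < 1 - ε) :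
    Gmap ε y = (y / (1 - ε)) ^ (1 - ε) := by
  rw [Gmap, if_neg h1.not_ge, if_pos h0]

theorem Gmap_zero (hε : ε < 1) : Gmap ε 0 = 0 := by
  rw [Gmap, if_neg (by linarith), if_neg (lt_irrefl 0), if_pos rfl]

theorem Gmap_of_neg_of_neg_one_add_lt (h0 : y < 0) (h1 : -1 + ε < y) :
    Gmap ε y = -(((1 - ε) ^ 3 * (y ^ 2)⁻¹ + ε) ^ (-(1 / 2 : ℝ))) := by
  rw [Gmap, if_neg (by linarith), if_neg h0.not_gt, if_neg h0.ne, if_pos h1, neg_sq]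

theorem Gmap_of_le_neg_one_add (hε : ε < 1) (hy : y ≤ -1 + ε) : Gmap ε y = y - ε := by
  rw [Gmap, if_neg (by linarith), if_neg (by linarith), if_neg (by linarith), if_neg hy.not_gt]

end Branches

section Inverse

variable {ε x y : ℝ}

theorem Gmap_Hmap_of_pos_of_lt_one (hε : ε < 1) (h0 : 0 < x) (h1 : x < 1) :
    Gmap ε (Hmap ε x) = x := by
  have hc : 0 < 1 - ε := by linarith
  set u := x ^ (1 - ε)⁻¹ with hu
  have hu0 : 0 < u := rpow_pos_of_pos h0 _
  have hu1 : u < 1 := rpow_lt_one h0.le h1 (inv_pos.mpr hc)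
  rw [Hmap_of_pos_of_lt_one h0 h1, one_div, ← hu,
    Gmap_of_pos_of_lt_one_sub (mul_pos hc hu0) (mul_lt_of_lt_one_right hc hu1),
    mul_div_cancel_left₀ _ hc.ne', rpow_inv_rpow h0.le hc.ne']

theorem Gmap_Hmap_of_neg_of_neg_one_lt (hε : ε < 1) (h0 : x < 0) (h1 : -1 < x) :
    Gmap ε (Hmap ε x) = x := by
  have hc : 0 < 1 - ε := by linarith
  have hinv : 1 < (x ^ 2)⁻¹ := one_lt_inv₀ (by nlinarith) |>.mpr (by nlinarith)
  set a := (x ^ 2)⁻¹ - ε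
  have ha : 1 - ε < a := by linarith
  set t := (1 - ε) ^ (3 / 2 : ℝ) * a ^ (-(1 / 2 : ℝ)) with ht
  have ht0 : 0 < t := mul_pos (rpow_pos_of_pos hc _) (rpow_pos_of_pos (hc.trans ha) _)
  have hta : (1 - ε) ^ 3 * (t ^ 2)⁻¹ = a :=
    (rpow_three_halves_mul_rpow_neg_half_eq_iff hc (by linarith) ht0).mp ht.symm
  have htc : t < 1 - ε := by
    refine lt_of_pow_lt_pow_left₀ 2 hc.le ?_
    rw [← hta] at ha
    field_simp at ha
    nlinarith
  rw [Hmap_of_neg_of_neg_one_lt h0 h1, ← ht, Gmap_of_neg_of_neg_one_add_lt (by linarith)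
    (by linarith), neg_sq, hta, neg_eq_iff_eq_neg, rpow_neg_half_eq_iff (by linarith)
    (by linarith), neg_sq]
  ring

theorem Gmap_Hmap (hε : ε < 1) (x : ℝ) : Gmap ε (Hmap ε x) = x := by
  rcases le_or_gt 1 x with h1 | h1
  · rw [Hmap_of_one_le h1, Gmap_of_one_sub_le (by linarith)]; ring
  rcases le_or_gt x (-1) with hm1 | hm1
  · rw [Hmap_of_le_neg_one hm1, Gmap_of_le_neg_one_add hε (by linarith)]; ring
  rcases lt_trichotomy x 0 with h0 | rfl | h0
  · exact Gmap_Hmap_of_neg_of_neg_one_lt hε h0 hm1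
  · rw [Hmap_zero, Gmap_zero hε]
  · exact Gmap_Hmap_of_pos_of_lt_one hε h0 h1

theorem Hmap_Gmap_of_pos_of_lt_one_sub (h0 : 0 < y) (h1 : y < 1 - ε) :
    Hmap ε (Gmap ε y) = y := by
  have hc : 0 < 1 - ε := by linarith
  have hq0 : 0 < y / (1 - ε) := div_pos h0 hc
  have hq1 : y / (1 - ε) < 1 := (div_lt_one hc).mpr h1
  rw [Gmap_of_pos_of_lt_one_sub h0 h1, Hmap_of_pos_of_lt_one (rpow_pos_of_pos hq0 _)
    (rpow_lt_one hq0.le hq1 hc), one_div, rpow_rpow_inv hq0.le hc.ne', mul_div_cancel₀ _ hc.ne']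

theorem Hmap_Gmap_of_neg_of_neg_one_add_lt (h0 : y < 0) (h1 : -1 + ε < y) :
    Hmap ε (Gmap ε y) = y := by
  have hc : 0 < 1 - ε := by linarith
  have hb : 1 - ε < (1 - ε) ^ 3 * (y ^ 2)⁻¹ := by
    have hy : y ^ 2 < (1 - ε) ^ 2 := by nlinarith
    rw [← div_eq_mul_inv, lt_div_iff₀ (by nlinarith)]
    nlinarith [mul_lt_mul_of_pos_left hy hc]
  set b := (1 - ε) ^ 3 * (y ^ 2)⁻¹ + ε
  set s := b ^ (-(1 / 2 : ℝ)) with hs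
  have hs0 : 0 < s := rpow_pos_of_pos (by linarith) _
  have hsb : (s ^ 2)⁻¹ = b := (rpow_neg_half_eq_iff (by linarith) hs0).mp hs.symm
  have hs1 : s < 1 := by
    refine lt_of_pow_lt_pow_left₀ 2 zero_le_one ?_
    rw [one_pow, ← inv_lt_inv₀ one_pos (pow_pos hs0 2), inv_one, hsb]
    linarith
  rw [Gmap_of_neg_of_neg_one_add_lt h0 h1, ← hs, Hmap_of_neg_of_neg_one_lt (by linarith)
    (by linarith), neg_sq, hsb, neg_eq_iff_eq_neg,
    rpow_three_halves_mul_rpow_neg_half_eq_iff hc (by linarith) (by linarith), neg_sq]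
  ring

theorem Hmap_Gmap (hε : ε < 1) (y : ℝ) : Hmap ε (Gmap ε y) = y := by
  rcases le_or_gt (1 - ε) y with h1 | h1
  · rw [Gmap_of_one_sub_le h1, Hmap_of_one_le (by linarith)]; ring
  rcases le_or_gt y (-1 + ε) with hm1 | hm1
  · rw [Gmap_of_le_neg_one_add hε hm1, Hmap_of_le_neg_one (by linarith)]; ring
  rcases lt_trichotomy y 0 with h0 | rfl | h0
  · exact Hmap_Gmap_of_neg_of_neg_one_add_lt h0 hm1
  · rw [Gmap_zero hε, Hmap_zero]
  · exact Hmap_Gmap_of_pos_of_lt_one_sub h0 h1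

end Inverse

theorem stmt_9_general (ε : ℝ) (hε3 : ε < 1 / 3) :
    (∀ x : ℝ, Gmap ε (Hmap ε x) = x) ∧ (∀ y : ℝ, Hmap ε (Gmap ε y) = y) := by
  have hε : ε < 1 := by linarith
  exact ⟨Gmap_Hmap hε, Hmap_Gmap hε⟩

theorem stmt_9 (ε : ℝ) (hε : 0 < ε) (hε3 : ε < 1 / 3) :
    (∀ x : ℝ, Gmap ε (Hmap ε x) = x) ∧ (∀ y : ℝ, Hmap ε (Gmap ε y) = y) :=
  stmt_9_general ε hε3
end

section
/- Let k, α, C₂ > 0 and let r ≥ 0 be locally integrable with sup_t ∫_t^{t+1} r(s) ds ≤ C₂. Then for every t ∈ ℝ, ∫_{-∞}^t k e^{-α(t-s)} r(s) · k e^{kC₂} e^{(kC₂ - α)(s-t)} ds ≤ k² C₂ e^{kC₂} / (1 - e^{-kC₂}), provided kC₂ < α (so that kC₂ - α < 0 and the bound e^{-kC₂} < 1 applies). -/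
open MeasureTheory Set

lemma aux_key (c C₂ : ℝ) (hc : 0 < c) (hC₂ : 0 < C₂) (r : ℝ → ℝ) (hr : ∀ t, 0 ≤ r t)
    (hloc : MeasureTheory.LocallyIntegrable r MeasureTheory.volume)
    (hsup : ∀ t : ℝ, ∫ s in t..(t + 1), r s ≤ C₂) (t : ℝ) :
    ∫ s in Set.Iic t, Real.exp (c * (s - t)) * r s ≤ C₂ / (1 - Real.exp (-c)) := by
  have hec : Real.exp (-c) < 1 := by
    rw [Real.exp_lt_one_iff]; linarith
  have hden : 0 < 1 - Real.exp (-c) := by linarith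
  set g : ℝ → ℝ := fun s => Real.exp (c * (s - t)) * r s with hg
  have hgnn : ∀ s, 0 ≤ g s := fun s => mul_nonneg (Real.exp_pos _).le (hr s)
  have hgm : AEStronglyMeasurable g (volume.restrict (Set.Iic t)) := by
    exact ((Real.continuous_exp.comp (by continuity)).aestronglyMeasurable.mul
      hloc.aestronglyMeasurable).restrict
  have hU : Set.Iic t = ⋃ n : ℕ, Set.Ioc (t - ((n : ℝ) + 1)) (t - n) := by
    ext x
    simp only [Set.mem_Iic, Set.mem_iUnion, Set.mem_Ioc]
    constructor
    · intro hx
      refine ⟨⌊t - x⌋₊, ?_, ?_⟩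
      · have := Nat.lt_floor_add_one (t - x); linarith
      · have := Nat.floor_le (sub_nonneg.mpr hx); linarith
    · rintro ⟨n, _, h2⟩
      have : (0:ℝ) ≤ n := Nat.cast_nonneg n
      linarith
  have hdisj : Pairwise (Function.onFun Disjoint
      fun n : ℕ => Set.Ioc (t - ((n : ℝ) + 1)) (t - n)) := by
    intro m n hmn
    rw [Function.onFun, Set.Ioc_disjoint_Ioc]
    rcases hmn.lt_or_gt with h | h
    · have hmn' : (m : ℝ) + 1 ≤ n := by exact_mod_cast h
      calc min (t - (m:ℝ)) (t - n) ≤ t - n := min_le_right _ _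
        _ ≤ t - ((m:ℝ) + 1) := by linarith
        _ ≤ max (t - ((m:ℝ) + 1)) (t - ((n:ℝ) + 1)) := le_max_left _ _
    · have hmn' : (n : ℝ) + 1 ≤ m := by exact_mod_cast h
      calc min (t - (m:ℝ)) (t - n) ≤ t - m := min_le_left _ _
        _ ≤ t - ((n:ℝ) + 1) := by linarith
        _ ≤ max (t - ((m:ℝ) + 1)) (t - ((n:ℝ) + 1)) := le_max_right _ _
  have hint : ∀ n : ℕ, IntegrableOn r (Set.Ioc (t - ((n:ℝ) + 1)) (t - n)) volume :=
    fun n => (hloc.integrableOn_isCompact isCompact_Icc).mono_set Set.Ioc_subset_Icc_self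
  have hRn : ∀ n : ℕ, ∫ s in Set.Ioc (t - ((n:ℝ) + 1)) (t - n), r s ≤ C₂ := by
    intro n
    have h1 : t - ((n:ℝ) + 1) ≤ t - ((n:ℝ) + 1) + 1 := by linarith
    have := hsup (t - ((n:ℝ) + 1))
    rw [intervalIntegral.integral_of_le h1,
      show t - ((n:ℝ) + 1) + 1 = t - (n:ℝ) by ring] at this
    exact this
  have hL : ∫⁻ s in Set.Iic t, ENNReal.ofReal (g s) ≤
      ENNReal.ofReal (C₂ / (1 - Real.exp (-c))) := by
    rw [hU, lintegral_iUnion (fun n => measurableSet_Ioc) hdisj]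
    have hterm : ∀ n : ℕ, ∫⁻ s in Set.Ioc (t - ((n:ℝ) + 1)) (t - n), ENNReal.ofReal (g s)
        ≤ ENNReal.ofReal (Real.exp (-c)) ^ n * ENNReal.ofReal C₂ := by
      intro n
      have step1 : ∫⁻ s in Set.Ioc (t - ((n:ℝ) + 1)) (t - n), ENNReal.ofReal (g s)
          ≤ ∫⁻ s in Set.Ioc (t - ((n:ℝ) + 1)) (t - n),
              ENNReal.ofReal (Real.exp (-(c * n))) * ENNReal.ofReal (r s) := by
        apply lintegral_mono_ae
        refine (ae_restrict_iff' measurableSet_Ioc).2 (Filter.Eventually.of_forall ?_)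
        intro s hs
        rw [hg]
        simp only
        rw [ENNReal.ofReal_mul (Real.exp_pos _).le]
        have h1 : s - t ≤ -(n:ℝ) := by linarith [hs.2]
        have h2 : c * (s - t) ≤ -(c * n) := by nlinarith
        exact mul_le_mul_left (ENNReal.ofReal_le_ofReal (Real.exp_le_exp.2 h2)) _
      have step2 : ∫⁻ s in Set.Ioc (t - ((n:ℝ) + 1)) (t - n),
          ENNReal.ofReal (Real.exp (-(c * n))) * ENNReal.ofReal (r s)
          = ENNReal.ofReal (Real.exp (-(c * n))) *
            ∫⁻ s in Set.Ioc (t - ((n:ℝ) + 1)) (t - n), ENNReal.ofReal (r s) :=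
        lintegral_const_mul' _ _ ENNReal.ofReal_ne_top
      have step3 : ∫⁻ s in Set.Ioc (t - ((n:ℝ) + 1)) (t - n), ENNReal.ofReal (r s)
          = ENNReal.ofReal (∫ s in Set.Ioc (t - ((n:ℝ) + 1)) (t - n), r s) :=
        (ofReal_integral_eq_lintegral_ofReal (hint n)
          (Filter.Eventually.of_forall hr)).symm
      have step4 : ENNReal.ofReal (Real.exp (-(c * n)))
          = ENNReal.ofReal (Real.exp (-c)) ^ n := by
        rw [show -(c * n) = (n : ℝ) * (-c) by ring, Real.exp_nat_mul,
          ENNReal.ofReal_pow (Real.exp_pos _).le]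
      calc ∫⁻ s in Set.Ioc (t - ((n:ℝ) + 1)) (t - n), ENNReal.ofReal (g s)
          ≤ _ := step1
        _ = _ := step2
        _ ≤ ENNReal.ofReal (Real.exp (-(c * n))) * ENNReal.ofReal C₂ := by
            rw [step3]; exact mul_le_mul_right (ENNReal.ofReal_le_ofReal (hRn n)) _
        _ = ENNReal.ofReal (Real.exp (-c)) ^ n * ENNReal.ofReal C₂ := by rw [step4]
    calc ∑' n : ℕ, ∫⁻ s in Set.Ioc (t - ((n:ℝ) + 1)) (t - n), ENNReal.ofReal (g s)
        ≤ ∑' n : ℕ, ENNReal.ofReal (Real.exp (-c)) ^ n * ENNReal.ofReal C₂ :=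
          ENNReal.tsum_le_tsum hterm
      _ = (1 - ENNReal.ofReal (Real.exp (-c)))⁻¹ * ENNReal.ofReal C₂ := by
          rw [ENNReal.tsum_mul_right, ENNReal.tsum_geometric]
      _ = ENNReal.ofReal (C₂ / (1 - Real.exp (-c))) := by
          rw [ENNReal.ofReal_div_of_pos hden, ENNReal.ofReal_sub _ (Real.exp_pos _).le,
            ENNReal.ofReal_one, ENNReal.div_eq_inv_mul]
  have heq : ∫ s in Set.Iic t, g s ∂volume
      = (∫⁻ s in Set.Iic t, ENNReal.ofReal (g s)).toReal :=
    integral_eq_lintegral_of_nonneg_ae (Filter.Eventually.of_forall hgnn) hgm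
  rw [heq]
  exact ENNReal.toReal_le_of_le_ofReal (le_of_lt (div_pos hC₂ hden)) hL

theorem stmt_14 (k α C₂ : ℝ) (hk : 0 < k) (hα : 0 < α) (hC₂ : 0 < C₂)
    (hkC₂ : k * C₂ < α)
    (r : ℝ → ℝ) (hr : ∀ t, 0 ≤ r t)
    (hloc : MeasureTheory.LocallyIntegrable r MeasureTheory.volume)
    (hsup : ∀ t : ℝ, ∫ s in t..(t + 1), r s ≤ C₂) :
    ∀ t : ℝ,
      (∫ s in Set.Iic t,
          k * Real.exp (-α * (t - s)) * r s *
            (k * Real.exp (k * C₂) * Real.exp ((k * C₂ - α) * (s - t)))) ≤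
        k ^ 2 * C₂ * Real.exp (k * C₂) / (1 - Real.exp (-(k * C₂))) := by
  intro t
  have hc : 0 < k * C₂ := mul_pos hk hC₂
  have heq : ∀ s : ℝ, k * Real.exp (-α * (t - s)) * r s *
      (k * Real.exp (k * C₂) * Real.exp ((k * C₂ - α) * (s - t)))
      = (k ^ 2 * Real.exp (k * C₂)) * (Real.exp ((k * C₂) * (s - t)) * r s) := by
    intro s
    rw [show (k * C₂) * (s - t) = (-α * (t - s)) + ((k * C₂ - α) * (s - t)) by ring,
      Real.exp_add]
    ring
  calc (∫ s in Set.Iic t,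
        k * Real.exp (-α * (t - s)) * r s *
          (k * Real.exp (k * C₂) * Real.exp ((k * C₂ - α) * (s - t))))
      = ∫ s in Set.Iic t,
          (k ^ 2 * Real.exp (k * C₂)) * (Real.exp ((k * C₂) * (s - t)) * r s) := by
        simp only [heq]
    _ = (k ^ 2 * Real.exp (k * C₂)) *
          ∫ s in Set.Iic t, Real.exp ((k * C₂) * (s - t)) * r s :=
        integral_const_mul _ _
    _ ≤ (k ^ 2 * Real.exp (k * C₂)) * (C₂ / (1 - Real.exp (-(k * C₂)))) := by
        have := aux_key (k * C₂) C₂ hc hC₂ r hr hloc hsup t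
        exact mul_le_mul_of_nonneg_left this (by positivity)
    _ = k ^ 2 * C₂ * Real.exp (k * C₂) / (1 - Real.exp (-(k * C₂))) := by ring
end
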